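/- arXiv:1104.0789 — 3 statements merged into one kernel-verified Lean document; each statement's English description precedes it below -/
import Mathlib

section
/- Let n ≥ 3, L > 0, and fix ξ, μ¹, μ² ∈ ℝⁿ with |μ¹| = |μ²| = 1, μ¹·μ² = μ¹·ξ = μ²·ξ = 0, and with last coordinate μ²_n > 0. For h > 0 with h·|ξ| ≤ 2, define ζ₁ = (i h/2)ξ + i√(1 − h²|ξ|²/4)·μ¹ + μ² and ζ₂ = −(i h/2)ξ + i√(1 − h²|ξ|²/4)·μ¹ − μ². For x = (x', x_n) ∈ ℝⁿ write x* = (x', −x_n) and x** = (x', −x_n + 2L). Then for every x with 0 < x_n < L: (i) |exp(x*·ζ₁/h + x·conj(ζ₂)/h)| = exp(−2 μ²_n x_n / h); (ii) |exp(x·ζ₁/h + x**·conj(ζ₂)/h)| = exp(2 μ²_n (x_n − L)/h); (iii) |exp(x*·ζ₁/h + x**·conj(ζ₂)/h)| = exp(−2 L μ²_n / h); in particular each of these three moduli tends to 0 as h → 0⁺. -/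
open Complex Finset Filter Topology

private lemma tendsto_exp_div_aux (c : ℝ) (hc : c < 0) :
    Tendsto (fun h : ℝ => Real.exp (c / h)) (𝓝[>] (0 : ℝ)) (𝓝 0) := by
  apply Real.tendsto_exp_atBot.comp
  exact (tendsto_inv_nhdsGT_zero.const_mul_atTop_of_neg hc).congr fun h => (div_eq_mul_inv c h).symm

/-- Moduli of the cross-term exponential phases arising from the reflection
argument in the slab `0 < xₙ < L`: exact formulas, and each modulus tends to
`0` as `h → 0⁺`. Here `x* = (x', -xₙ)` and `x** = (x', -xₙ + 2L)`. -/
theorem reflected_phase_moduli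
    (n : ℕ) (hn : 3 ≤ n) (L : ℝ) (hL : 0 < L)
    (en : Fin n) (hen : (en : ℕ) = n - 1)
    (ξ μ1 μ2 : EuclideanSpace ℝ (Fin n))
    (hμ1 : ‖μ1‖ = 1) (hμ2 : ‖μ2‖ = 1)
    (hμ1μ2 : ∑ j, μ1 j * μ2 j = 0)
    (hμ1ξ : ∑ j, μ1 j * ξ j = 0)
    (hμ2ξ : ∑ j, μ2 j * ξ j = 0)
    (hμ2n : 0 < μ2 en)
    (ζ1 ζ2 : ℝ → Fin n → ℂ)
    (hζ1 : ∀ h : ℝ, ζ1 h = fun j => Complex.I * ((h : ℂ) / 2) * (ξ j : ℂ)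
      + Complex.I * ((Real.sqrt (1 - h ^ 2 * ‖ξ‖ ^ 2 / 4) : ℝ) : ℂ) * (μ1 j : ℂ)
      + (μ2 j : ℂ))
    (hζ2 : ∀ h : ℝ, ζ2 h = fun j => -(Complex.I * ((h : ℂ) / 2) * (ξ j : ℂ))
      + Complex.I * ((Real.sqrt (1 - h ^ 2 * ‖ξ‖ ^ 2 / 4) : ℝ) : ℂ) * (μ1 j : ℂ)
      - (μ2 j : ℂ)) :
    ∀ x : EuclideanSpace ℝ (Fin n), 0 < x en → x en < L →
      ((∀ h : ℝ, 0 < h → h * ‖ξ‖ ≤ 2 →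
        -- (i) |exp(x*⋅ζ₁/h + x⋅conj ζ₂/h)| = exp(-2 μ²ₙ xₙ / h)
        ‖Complex.exp ((∑ j, (((if j = en then -x j else x j : ℝ)) : ℂ) * ζ1 h j) / (h : ℂ)
            + (∑ j, (x j : ℂ) * (starRingEnd ℂ) (ζ2 h j)) / (h : ℂ))‖
          = Real.exp (-2 * μ2 en * x en / h) ∧
        -- (ii) |exp(x⋅ζ₁/h + x**⋅conj ζ₂/h)| = exp(2 μ²ₙ (xₙ - L) / h)
        ‖Complex.exp ((∑ j, (x j : ℂ) * ζ1 h j) / (h : ℂ)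
            + (∑ j, (((if j = en then -x j + 2 * L else x j : ℝ)) : ℂ) *
                (starRingEnd ℂ) (ζ2 h j)) / (h : ℂ))‖
          = Real.exp (2 * μ2 en * (x en - L) / h) ∧
        -- (iii) |exp(x*⋅ζ₁/h + x**⋅conj ζ₂/h)| = exp(-2 L μ²ₙ / h)
        ‖Complex.exp ((∑ j, (((if j = en then -x j else x j : ℝ)) : ℂ) * ζ1 h j) / (h : ℂ)
            + (∑ j, (((if j = en then -x j + 2 * L else x j : ℝ)) : ℂ) *
                (starRingEnd ℂ) (ζ2 h j)) / (h : ℂ))‖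
          = Real.exp (-2 * L * μ2 en / h)) ∧
      -- in particular, each of the three moduli tends to 0 as h → 0⁺
      Tendsto (fun h : ℝ =>
          ‖Complex.exp ((∑ j, (((if j = en then -x j else x j : ℝ)) : ℂ) * ζ1 h j) / (h : ℂ)
            + (∑ j, (x j : ℂ) * (starRingEnd ℂ) (ζ2 h j)) / (h : ℂ))‖)
        (𝓝[>] (0 : ℝ)) (𝓝 0) ∧
      Tendsto (fun h : ℝ =>
          ‖Complex.exp ((∑ j, (x j : ℂ) * ζ1 h j) / (h : ℂ)
            + (∑ j, (((if j = en then -x j + 2 * L else x j : ℝ)) : ℂ) *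
                (starRingEnd ℂ) (ζ2 h j)) / (h : ℂ))‖)
        (𝓝[>] (0 : ℝ)) (𝓝 0) ∧
      Tendsto (fun h : ℝ =>
          ‖Complex.exp ((∑ j, (((if j = en then -x j else x j : ℝ)) : ℂ) * ζ1 h j) / (h : ℂ)
            + (∑ j, (((if j = en then -x j + 2 * L else x j : ℝ)) : ℂ) *
                (starRingEnd ℂ) (ζ2 h j)) / (h : ℂ))‖)
        (𝓝[>] (0 : ℝ)) (𝓝 0)) := by
  intro x hx0 hxL
  -- key modulus formula, valid for all nonzero h
  have key : ∀ (y z : Fin n → ℝ) (h : ℝ),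
      ‖Complex.exp ((∑ j, ((y j : ℝ) : ℂ) * ζ1 h j) / (h : ℂ)
        + (∑ j, ((z j : ℝ) : ℂ) * (starRingEnd ℂ) (ζ2 h j)) / (h : ℂ))‖
      = Real.exp ((∑ j, (y j - z j) * μ2 j) / h) := by
    intro y z h
    rw [Complex.norm_exp]
    congr 1
    have h1 : (∑ j, ((y j : ℝ) : ℂ) * ζ1 h j).re = ∑ j, y j * μ2 j := by
      rw [hζ1, Complex.re_sum]
      refine Finset.sum_congr rfl fun j _ => ?_
      simp [Complex.mul_re, Complex.div_ofNat_im, Complex.div_ofNat_re]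
    have h2 : (∑ j, ((z j : ℝ) : ℂ) * (starRingEnd ℂ) (ζ2 h j)).re
        = -∑ j, z j * μ2 j := by
      rw [hζ2, ← Finset.sum_neg_distrib, Complex.re_sum]
      refine Finset.sum_congr rfl fun j _ => ?_
      simp [Complex.mul_re, map_sub, map_add, map_mul, map_neg, map_ofNat,
        Complex.div_ofNat_im, Complex.div_ofNat_re]
    simp only [Complex.add_re, Complex.div_ofReal_re, h1, h2, sub_mul, Finset.sum_sub_distrib]
    ring
  have sA : ∑ j, ((if j = en then -x j else x j) - x j) * μ2 j = -2 * μ2 en * x en := by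
    have : ∀ j, ((if j = en then -x j else x j) - x j) * μ2 j
        = if j = en then -2 * μ2 en * x en else 0 := by
      intro j
      by_cases hj : j = en
      · subst hj; simp; try ring
      · simp [hj]
    simp [this]
  have sB : ∑ j, (x j - (if j = en then -x j + 2 * L else x j)) * μ2 j
      = 2 * μ2 en * (x en - L) := by
    have : ∀ j, (x j - (if j = en then -x j + 2 * L else x j)) * μ2 j
        = if j = en then 2 * μ2 en * (x en - L) else 0 := by
      intro j
      by_cases hj : j = en
      · subst hj; simp; try ring
      · simp [hj]
    simp [this]
  have sC : ∑ j, ((if j = en then -x j else x j)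
      - (if j = en then -x j + 2 * L else x j)) * μ2 j = -2 * L * μ2 en := by
    have : ∀ j, ((if j = en then -x j else x j)
        - (if j = en then -x j + 2 * L else x j)) * μ2 j
        = if j = en then -2 * L * μ2 en else 0 := by
      intro j
      by_cases hj : j = en
      · subst hj; simp; try ring
      · simp [hj]
    simp [this]
  have kA : ∀ h : ℝ,
      ‖Complex.exp ((∑ j, (((if j = en then -x j else x j : ℝ)) : ℂ) * ζ1 h j) / (h : ℂ)
        + (∑ j, (x j : ℂ) * (starRingEnd ℂ) (ζ2 h j)) / (h : ℂ))‖
      = Real.exp (-2 * μ2 en * x en / h) := fun h => by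
    simpa [sA] using key (fun j => if j = en then -x j else x j) (fun j => x j) h
  have kB : ∀ h : ℝ,
      ‖Complex.exp ((∑ j, (x j : ℂ) * ζ1 h j) / (h : ℂ)
        + (∑ j, (((if j = en then -x j + 2 * L else x j : ℝ)) : ℂ) *
            (starRingEnd ℂ) (ζ2 h j)) / (h : ℂ))‖
      = Real.exp (2 * μ2 en * (x en - L) / h) := fun h => by
    simpa [sB] using key (fun j => x j) (fun j => if j = en then -x j + 2 * L else x j) h
  have kC : ∀ h : ℝ,
      ‖Complex.exp ((∑ j, (((if j = en then -x j else x j : ℝ)) : ℂ) * ζ1 h j) / (h : ℂ)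
        + (∑ j, (((if j = en then -x j + 2 * L else x j : ℝ)) : ℂ) *
            (starRingEnd ℂ) (ζ2 h j)) / (h : ℂ))‖
      = Real.exp (-2 * L * μ2 en / h) := fun h => by
    simpa [sC] using key (fun j => if j = en then -x j else x j)
      (fun j => if j = en then -x j + 2 * L else x j) h
  refine ⟨fun h _ _ => ⟨kA h, kB h, kC h⟩, ?_, ?_, ?_⟩
  · have := tendsto_exp_div_aux (-2 * μ2 en * x en) (by nlinarith)
    exact this.congr fun h => (kA h).symm
  · have := tendsto_exp_div_aux (2 * μ2 en * (x en - L)) (by nlinarith)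
    exact this.congr fun h => (kB h).symm
  · have := tendsto_exp_div_aux (-2 * L * μ2 en) (by nlinarith)
    exact this.congr fun h => (kC h).symm
end

section
/- Let n ≥ 3 and let w : ℝⁿ → ℂⁿ be integrable with compact support (each component w_j ∈ L¹(ℝⁿ) and w vanishes outside a compact set). Suppose that for all ξ, μ¹ ∈ ℝⁿ with μ¹·ξ = 0 and for which there exists μ² ∈ ℝⁿ with μ²·μ¹ = 0, μ²·ξ = 0 and μ²_n > 0, one has ∑_{j=1}^n μ¹_j ∫_{ℝⁿ} w_j(x) e^{i x·ξ} dx = 0. Then for all ξ ∈ ℝⁿ and all indices 1 ≤ j, k ≤ n, ξ_j ∫_{ℝⁿ} w_k(x) e^{i x·ξ} dx = ξ_k ∫_{ℝⁿ} w_j(x) e^{i x·ξ} dx; equivalently, the distributional curl of w vanishes: ∂_j w_k − ∂_k w_j = 0 on ℝⁿ. -/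
open Complex Finset MeasureTheory

/-- Proposition 3.3: if a compactly supported integrable vector field
`w : ℝⁿ → ℂⁿ` satisfies the orthogonality relations
`∑ⱼ μ¹ⱼ ∫ wⱼ(x) e^{i x⋅ξ} dx = 0` for all `ξ ⊥ μ¹` for which there exists `μ²`
orthogonal to both with positive last coordinate, then
`ξⱼ ∫ w_k e^{i x⋅ξ} dx = ξ_k ∫ wⱼ e^{i x⋅ξ} dx` for all `ξ, j, k`; equivalently,
the distributional curl of `w` vanishes. -/
theorem curl_eq_zero_of_orthogonality
    (n : ℕ) (hn : 3 ≤ n)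
    (en : Fin n) (hen : (en : ℕ) = n - 1)
    (w : EuclideanSpace ℝ (Fin n) → Fin n → ℂ)
    (hint : ∀ j : Fin n, Integrable (fun x => w x j))
    (hsupp : HasCompactSupport w)
    (horth : ∀ ξ μ1 : EuclideanSpace ℝ (Fin n),
      (∑ j, μ1 j * ξ j) = 0 →
      (∃ μ2 : EuclideanSpace ℝ (Fin n),
        (∑ j, μ2 j * μ1 j) = 0 ∧ (∑ j, μ2 j * ξ j) = 0 ∧ 0 < μ2 en) →
      ∑ j, (μ1 j : ℂ) *
        ∫ x, w x j * Complex.exp (Complex.I * ∑ k, (x k : ℂ) * (ξ k : ℂ)) = 0) :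
    ∀ ξ : EuclideanSpace ℝ (Fin n), ∀ j k : Fin n,
      (ξ j : ℂ) * ∫ x, w x k * Complex.exp (Complex.I * ∑ l, (x l : ℂ) * (ξ l : ℂ))
      = (ξ k : ℂ) * ∫ x, w x j * Complex.exp (Complex.I * ∑ l, (x l : ℂ) * (ξ l : ℂ)) := by
  classical
  set F : EuclideanSpace ℝ (Fin n) → Fin n → ℂ := fun ξ i =>
    ∫ x, w x i * Complex.exp (Complex.I * ∑ l, (x l : ℂ) * (ξ l : ℂ)) with hF
  -- continuity of the Fourier-type integral
  have hFcont : ∀ i, Continuous fun ξ => F ξ i := by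
    intro i
    apply continuous_of_dominated (bound := fun x => ‖w x i‖)
    · intro ξ
      exact (hint i).aestronglyMeasurable.mul (Continuous.aestronglyMeasurable (by fun_prop))
    · intro ξ
      filter_upwards with x
      have hr : (∑ l, (x l : ℂ) * (ξ l : ℂ)) = ((∑ l, x l * ξ l : ℝ) : ℂ) := by
        push_cast; ring
      rw [norm_mul, hr]
      simp [Complex.norm_exp]
    · exact (hint i).norm
    · filter_upwards with x
      fun_prop
  -- key pointwise identity on the set where all coordinates are nonzero
  have key : ∀ ξ : EuclideanSpace ℝ (Fin n), (∀ i, ξ i ≠ 0) → ∀ j k : Fin n,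
      (ξ j : ℂ) * F ξ k = (ξ k : ℂ) * F ξ j := by
    intro ξ hξ j k
    rcases eq_or_ne j k with rfl | hjk
    · rfl
    -- choose an auxiliary index l ∉ {j,k} and scalars t, d with
    -- t*(ξj² + ξk²) + d * ξ l = 0 and positivity of the candidate μ2 at `en`
    have hsq : 0 < ξ j ^ 2 + ξ k ^ 2 := by
      have := hξ j; positivity
    obtain ⟨l, hlj, hlk, t, d, htd, hpos⟩ :
        ∃ l : Fin n, l ≠ j ∧ l ≠ k ∧ ∃ t d : ℝ,
          t * (ξ j ^ 2 + ξ k ^ 2) + d * ξ l = 0 ∧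
          0 < (if en = j then t * ξ j else 0) + (if en = k then t * ξ k else 0) +
            (if en = l then d else 0) := by
      by_cases hen' : en = j ∨ en = k
      · obtain ⟨l, hl⟩ : ∃ l : Fin n, l ∉ ({j, k} : Finset (Fin n)) := by
          by_contra h
          push_neg at h
          have h1 : (Finset.univ : Finset (Fin n)).card ≤ ({j, k} : Finset (Fin n)).card :=
            Finset.card_le_card fun x _ => h x
          have h2 : ({j, k} : Finset (Fin n)).card ≤ 2 :=
            (Finset.card_insert_le _ _).trans (by simp)
          simp only [Finset.card_univ, Fintype.card_fin] at h1
          omega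
        have hlj : l ≠ j := fun h => hl (by simp [h])
        have hlk : l ≠ k := fun h => hl (by simp [h])
        refine ⟨l, hlj, hlk, ξ en, -(ξ en * (ξ j ^ 2 + ξ k ^ 2)) / ξ l,
          by field_simp [hξ l]; ring, ?_⟩
        rcases hen' with h | h
        · have h1 : en ≠ k := by rw [h]; exact hjk
          have h2 : en ≠ l := fun hh => hlj (hh.symm.trans h)
          rw [if_pos h, if_neg h1, if_neg h2, h]
          simpa using mul_self_pos.mpr (hξ j)
        · have h1 : en ≠ j := by rw [h]; exact (Ne.symm hjk)
          have h2 : en ≠ l := fun hh => hlk (hh.symm.trans h)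
          rw [if_neg h1, if_pos h, if_neg h2, h]
          simpa using mul_self_pos.mpr (hξ k)
      · push_neg at hen'
        exact ⟨en, hen'.1, hen'.2, -(ξ en), ξ j ^ 2 + ξ k ^ 2, by ring,
          by rw [if_neg hen'.1, if_neg hen'.2, if_pos rfl]; simpa using hsq⟩
    -- set up μ1 and μ2 and apply the orthogonality hypothesis
    set μ1 : EuclideanSpace ℝ (Fin n) := WithLp.toLp 2 fun i =>
      (if i = j then ξ k else 0) + (if i = k then -(ξ j) else 0) with hμ1
    set μ2 : EuclideanSpace ℝ (Fin n) := WithLp.toLp 2 fun i =>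
      (if i = j then t * ξ j else 0) + (if i = k then t * ξ k else 0) +
        (if i = l then d else 0) with hμ2
    have hμ1ξ : (∑ i, μ1 i * ξ i) = 0 := by
      simp only [hμ1, PiLp.toLp_apply, add_mul, ite_mul, zero_mul, Finset.sum_add_distrib,
        Finset.sum_ite_eq', Finset.mem_univ, if_true]
      ring
    have hμ2exists : ∃ μ2 : EuclideanSpace ℝ (Fin n),
        (∑ i, μ2 i * μ1 i) = 0 ∧ (∑ i, μ2 i * ξ i) = 0 ∧ 0 < μ2 en := by
      refine ⟨μ2, ?_, ?_, ?_⟩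
      · simp only [hμ2, hμ1, PiLp.toLp_apply, add_mul, ite_mul, zero_mul, mul_ite, mul_zero,
          Finset.sum_add_distrib, Finset.sum_ite_eq', Finset.mem_univ, if_true,
          if_neg hjk, if_neg (Ne.symm hjk), if_neg hlj, if_neg hlk,
          if_neg (Ne.symm hlj), if_neg (Ne.symm hlk)]
        ring
      · simp only [hμ2, PiLp.toLp_apply, add_mul, ite_mul, zero_mul, Finset.sum_add_distrib,
          Finset.sum_ite_eq', Finset.mem_univ, if_true]
        nlinarith [htd]
      · simpa only [hμ2, PiLp.toLp_apply] using hpos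
    have h0 := horth ξ μ1 hμ1ξ hμ2exists
    simp only [hμ1, PiLp.toLp_apply, Complex.ofReal_add, apply_ite (fun r : ℝ => (r : ℂ)),
      Complex.ofReal_zero, Complex.ofReal_neg, add_mul, ite_mul, zero_mul,
      Finset.sum_add_distrib, Finset.sum_ite_eq', Finset.mem_univ, if_true] at h0
    linear_combination -h0
  -- conclude by continuity and density
  have hdense : Dense {ξ : EuclideanSpace ℝ (Fin n) | ∀ i, ξ i ≠ 0} := by
    rw [Metric.dense_iff]
    intro x r hr
    set c : EuclideanSpace ℝ (Fin n) := WithLp.toLp 2 fun _ => (1 : ℝ) with hc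
    obtain ⟨ε, hε, hεbad⟩ : ∃ ε ∈ Set.Ioo (0 : ℝ) (r / (‖c‖ + 1)),
        ε ∉ (Finset.image (fun i => -x i) Finset.univ) := by
      apply Set.Infinite.exists_notMem_finset
      apply Set.Ioo_infinite
      have h1 : 0 < ‖c‖ + 1 := by positivity
      positivity
    refine ⟨x + ε • c, ?_, ?_⟩
    · rw [Metric.mem_ball, dist_eq_norm]
      have : x + ε • c - x = ε • c := by abel
      rw [this, norm_smul]
      calc ‖ε‖ * ‖c‖ ≤ ‖ε‖ * (‖c‖ + 1) := by
            apply mul_le_mul_of_nonneg_left (by linarith) (norm_nonneg _)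
        _ < r := by
            rw [Real.norm_eq_abs, abs_of_pos hε.1]
            have h1 : 0 < ‖c‖ + 1 := by positivity
            calc ε * (‖c‖ + 1) < (r / (‖c‖ + 1)) * (‖c‖ + 1) := by
                  exact mul_lt_mul_of_pos_right hε.2 h1
              _ = r := by field_simp
    · intro i
      have : (x + ε • c) i = x i + ε := by
        simp [hc, PiLp.add_apply, PiLp.smul_apply]
      rw [this]
      intro hzero
      apply hεbad
      simp only [Finset.mem_image, Finset.mem_univ, true_and]
      exact ⟨i, by linarith⟩
  -- extend by continuity
  intro ξ j k
  have heq : (fun ξ : EuclideanSpace ℝ (Fin n) => (ξ j : ℂ) * F ξ k - (ξ k : ℂ) * F ξ j)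
      = fun _ => (0 : ℂ) := by
    apply Continuous.ext_on hdense _ continuous_const
    · intro ξ hξ
      have := key ξ hξ j k
      simp [this]
    · apply Continuous.sub
      · exact (Complex.continuous_ofReal.comp (EuclideanSpace.proj j).continuous).mul (hFcont k)
      · exact (Complex.continuous_ofReal.comp (EuclideanSpace.proj k).continuous).mul (hFcont j)
  have := congrFun heq ξ
  simpa [sub_eq_zero, hF] using this
end

section
/- Let n ≥ 3 and let w : ℝⁿ → ℂⁿ be integrable with compact support. Suppose that for all ξ, μ¹, μ² ∈ ℝⁿ satisfying ξ·μ¹ = ξ·μ² = μ¹·μ² = 0, |μ¹| = |μ²| = 1, μ²_n = 0 and μ¹_n ≠ 0, and for all real numbers a, b, one has ∑_{j=1}^n (a μ¹_j + b μ²_j) ∫_{ℝⁿ} w_j(x) e^{i x·ξ} dx = 0. Then for all ξ ∈ ℝⁿ and all indices 1 ≤ j, k ≤ n, ξ_j ∫_{ℝⁿ} w_k(x) e^{i x·ξ} dx = ξ_k ∫_{ℝⁿ} w_j(x) e^{i x·ξ} dx; equivalently, ∂_j w_k − ∂_k w_j = 0 in the sense of distributions on ℝⁿ. -/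
open Complex Finset MeasureTheory

lemma aux_norm_scaled (n : ℕ) (u : EuclideanSpace ℝ (Fin n)) (S : ℝ) (hS : 0 < S)
    (hsum : ∑ l, u l ^ 2 = S) :
    ‖(Real.sqrt S)⁻¹ • u‖ = 1 := by
  have hu : ‖u‖ = Real.sqrt S := by
    rw [EuclideanSpace.norm_eq u]
    congr 1
    simpa [Real.norm_eq_abs, sq_abs] using hsum
  rw [norm_smul, hu, Real.norm_eq_abs, abs_inv, _root_.abs_of_nonneg (Real.sqrt_nonneg S),
    inv_mul_cancel₀ (by positivity)]

lemma aux_key (n : ℕ) (hn : 3 ≤ n) (en : Fin n)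
    (F : Fin n → EuclideanSpace ℝ (Fin n) → ℂ)
    (horth' : ∀ ξ μ1 μ2 : EuclideanSpace ℝ (Fin n),
      (∑ j, ξ j * μ1 j) = 0 → (∑ j, ξ j * μ2 j) = 0 → (∑ j, μ1 j * μ2 j) = 0 →
      ‖μ1‖ = 1 → ‖μ2‖ = 1 → μ2 en = 0 → μ1 en ≠ 0 →
      ∀ a b : ℝ, ∑ j, ((a * μ1 j + b * μ2 j : ℝ) : ℂ) * F j ξ = 0)
    (ξ : EuclideanSpace ℝ (Fin n)) (i₁ : Fin n) (hi₁ : i₁ ≠ en) (hξ : ξ i₁ ≠ 0)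
    (v : EuclideanSpace ℝ (Fin n)) (hv : ∑ l, v l * ξ l = 0) :
    ∑ l, (v l : ℂ) * F l ξ = 0 := by
  classical
  set Q : ℝ := ∑ j, ξ j ^ 2 with hQdef
  have hQi : ξ i₁ ^ 2 ≤ Q :=
    Finset.single_le_sum (f := fun j => ξ j ^ 2) (fun i _ => sq_nonneg _) (mem_univ i₁)
  have hQ0 : 0 < Q := lt_of_lt_of_le (by positivity) hQi
  have hlt : ξ en ^ 2 < Q := by
    have hpair : ξ en ^ 2 + ξ i₁ ^ 2 ≤ Q := by
      have h := Finset.sum_le_sum_of_subset_of_nonneg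
        (Finset.subset_univ ({en, i₁} : Finset (Fin n))) (fun i _ _ => sq_nonneg (ξ i))
      rwa [Finset.sum_pair (Ne.symm hi₁)] at h
    have : 0 < ξ i₁ ^ 2 := by positivity
    linarith
  set c : ℝ := ξ en / Q with hcdef
  set p : EuclideanSpace ℝ (Fin n) := WithLp.toLp 2 (fun l => (if l = en then (1:ℝ) else 0) - c * ξ l) with hpdef
  have hpl : ∀ l, p l = (if l = en then (1:ℝ) else 0) - c * ξ l := fun l => rfl
  -- p ⊥ ξ
  have hpxi : ∑ l, p l * ξ l = 0 := by
    have : ∀ l, p l * ξ l = (if l = en then ξ l else 0) - c * ξ l ^ 2 := by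
      intro l; rw [hpl l]; split_ifs <;> ring
    rw [Finset.sum_congr rfl (fun l _ => this l), Finset.sum_sub_distrib,
      Finset.sum_ite_eq' univ en (fun l => ξ l), ← Finset.mul_sum, ← hQdef, hcdef]
    simp [hQ0.ne']
  set P : ℝ := 1 - c * ξ en with hPdef
  have hcQ : c * Q = ξ en := by rw [hcdef]; field_simp
  have hP0 : 0 < P := by
    rw [hPdef, hcdef]
    have h1 : ξ en ^ 2 / Q < 1 := (div_lt_one hQ0).mpr hlt
    have h2 : ξ en / Q * ξ en = ξ en ^ 2 / Q := by ring
    linarith [h2 ▸ h1]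
  have hpp : ∑ l, p l ^ 2 = P := by
    have hterm : ∀ l, p l ^ 2 = ((if l = en then (1:ℝ) else 0) - 2 * c * (if l = en then ξ l else 0))
        + c ^ 2 * ξ l ^ 2 := by
      intro l; rw [hpl l]; split_ifs <;> ring
    have h1 : ∑ l, (if l = en then (1:ℝ) else 0) = 1 := by simp
    have h2 : ∑ l, (2 * c * (if l = en then ξ l else 0)) = 2 * c * ξ en := by
      rw [← Finset.mul_sum, Finset.sum_ite_eq' univ en (fun l => ξ l)]; simp
    have h3 : ∑ l, c ^ 2 * ξ l ^ 2 = c ^ 2 * Q := by rw [← Finset.mul_sum]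
    have h4 : c ^ 2 * Q = c * ξ en := by rw [sq, mul_assoc, hcQ]
    rw [Finset.sum_congr rfl (fun l _ => hterm l), Finset.sum_add_distrib,
      Finset.sum_sub_distrib, h1, h2, h3, h4, hPdef]
    ring
  have hpen : p en = P := by rw [hpl en, if_pos rfl, hPdef]
  set sP : ℝ := Real.sqrt P with hsPdef
  have hsP0 : 0 < sP := Real.sqrt_pos.mpr hP0
  have hsP2 : sP ^ 2 = P := Real.sq_sqrt hP0.le
  set μ1 : EuclideanSpace ℝ (Fin n) := sP⁻¹ • p with hμ1def
  have hμ1l : ∀ l, μ1 l = sP⁻¹ * p l := fun l => rfl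
  have hμ1norm : ‖μ1‖ = 1 := aux_norm_scaled n p P hP0 hpp
  have hμ1en : μ1 en ≠ 0 := by
    rw [hμ1l, hpen]
    positivity
  have hμ1ξ : ∑ l, ξ l * μ1 l = 0 := by
    have : ∀ l, ξ l * μ1 l = sP⁻¹ * (p l * ξ l) := by intro l; rw [hμ1l]; ring
    rw [Finset.sum_congr rfl (fun l _ => this l), ← Finset.mul_sum, hpxi, mul_zero]
  -- choose i₂
  obtain ⟨i₂, hi₂en, hi₂i₁⟩ : ∃ i₂ : Fin n, i₂ ≠ en ∧ i₂ ≠ i₁ := by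
    by_contra hcon
    push_neg at hcon
    have hsub : (Finset.univ : Finset (Fin n)) ⊆ {en, i₁} := by
      intro i _
      simp only [Finset.mem_insert, Finset.mem_singleton]
      rcases eq_or_ne i en with h' | h'
      · exact Or.inl h'
      · exact Or.inr (hcon i h')
    have h1 := Finset.card_le_card hsub
    have h2 : ({en, i₁} : Finset (Fin n)).card ≤ 2 := (Finset.card_insert_le _ _).trans (by simp)
    rw [Finset.card_univ, Fintype.card_fin] at h1
    omega
  set r : EuclideanSpace ℝ (Fin n) :=
    WithLp.toLp 2 (fun l => if l = i₁ then ξ i₂ else if l = i₂ then -ξ i₁ else 0) with hrdef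
  have hrl : ∀ l, r l = if l = i₁ then ξ i₂ else if l = i₂ then -ξ i₁ else 0 := fun l => rfl
  have hri₁ : r i₁ = ξ i₂ := by rw [hrl, if_pos rfl]
  have hri₂ : r i₂ = -ξ i₁ := by rw [hrl, if_neg hi₂i₁, if_pos rfl]
  have hsum2 : ∀ g : Fin n → ℝ, ∑ l, r l * g l = ξ i₂ * g i₁ - ξ i₁ * g i₂ := by
    intro g
    have hterm : ∀ l, r l * g l =
        (if l = i₁ then ξ i₂ * g l else 0) + (if l = i₂ then -ξ i₁ * g l else 0) := by
      intro l; rw [hrl l]; split_ifs <;> simp_all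
    rw [Finset.sum_congr rfl (fun l _ => hterm l), Finset.sum_add_distrib,
      Finset.sum_ite_eq' univ i₁ (fun l => ξ i₂ * g l),
      Finset.sum_ite_eq' univ i₂ (fun l => -ξ i₁ * g l)]
    simp; ring
  have hrξ : ∑ l, r l * ξ l = 0 := by rw [hsum2]; ring
  have hren : r en = 0 := by
    rw [hrl en, if_neg (fun h => hi₁ h.symm), if_neg (fun h => hi₂en h.symm)]
  have hrp : ∑ l, r l * p l = 0 := by
    have h := hsum2 p
    rw [hsum2 p, hpl i₁, hpl i₂, if_neg hi₁, if_neg hi₂en]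
    ring
  have hRval : ∑ l, r l ^ 2 = ξ i₂ ^ 2 + ξ i₁ ^ 2 := by
    rw [Finset.sum_congr rfl (fun l _ => pow_two (r l)), hsum2 r, hri₁, hri₂]
    ring
  set R : ℝ := ξ i₂ ^ 2 + ξ i₁ ^ 2 with hRdef
  have hR0 : 0 < R := by
    have h1 : 0 < ξ i₁ ^ 2 := lt_of_le_of_ne (sq_nonneg _) (Ne.symm (pow_ne_zero 2 hξ))
    have h2 : 0 ≤ ξ i₂ ^ 2 := sq_nonneg _
    rw [hRdef]; linarith
  set sR : ℝ := Real.sqrt R with hsRdef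
  have hsR0 : 0 < sR := Real.sqrt_pos.mpr hR0
  set μ2r : EuclideanSpace ℝ (Fin n) := sR⁻¹ • r with hμ2rdef
  have hμ2rl : ∀ l, μ2r l = sR⁻¹ * r l := fun l => rfl
  have hμ2rnorm : ‖μ2r‖ = 1 := aux_norm_scaled n r R hR0 hRval
  have hμ2rξ : ∑ l, ξ l * μ2r l = 0 := by
    have h : ∀ l, ξ l * μ2r l = sR⁻¹ * (r l * ξ l) := by intro l; rw [hμ2rl]; ring
    rw [Finset.sum_congr rfl (fun l _ => h l), ← Finset.mul_sum, hrξ, mul_zero]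
  have hμ1μ2r : ∑ l, μ1 l * μ2r l = 0 := by
    have h : ∀ l, μ1 l * μ2r l = (sP⁻¹ * sR⁻¹) * (r l * p l) := by
      intro l; rw [hμ1l, hμ2rl]; ring
    rw [Finset.sum_congr rfl (fun l _ => h l), ← Finset.mul_sum, hrp, mul_zero]
  have hμ2ren : μ2r en = 0 := by rw [hμ2rl, hren, mul_zero]
  -- decomposition of v
  set t : ℝ := (∑ l, v l * p l) / P with htdef
  set v' : EuclideanSpace ℝ (Fin n) := WithLp.toLp 2 (fun l => v l - t * p l) with hv'def
  have hv'l : ∀ l, v' l = v l - t * p l := fun l => rfl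
  have hv'p : ∑ l, v' l * p l = 0 := by
    have h : ∀ l, v' l * p l = v l * p l - t * p l ^ 2 := by intro l; rw [hv'l]; ring
    rw [Finset.sum_congr rfl (fun l _ => h l), Finset.sum_sub_distrib, ← Finset.mul_sum, hpp,
      htdef]
    field_simp
    ring
  have hv'ξ : ∑ l, v' l * ξ l = 0 := by
    have h : ∀ l, v' l * ξ l = v l * ξ l - t * (p l * ξ l) := by intro l; rw [hv'l]; ring
    rw [Finset.sum_congr rfl (fun l _ => h l), Finset.sum_sub_distrib, hv, ← Finset.mul_sum,
      hpxi, mul_zero, sub_zero]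
  have hv'en : v' en = 0 := by
    have hδ : ∑ l, v' l * (if l = en then (1:ℝ) else 0) = v' en := by simp [mul_ite]
    have h : ∀ l, v' l * (if l = en then (1:ℝ) else 0) = v' l * p l + c * (v' l * ξ l) := by
      intro l; rw [hpl l]; ring
    rw [← hδ, Finset.sum_congr rfl (fun l _ => h l), Finset.sum_add_distrib, hv'p,
      ← Finset.mul_sum, hv'ξ, mul_zero, add_zero]
  by_cases hcase : ∀ l, v' l = 0
  · have happ := horth' ξ μ1 μ2r hμ1ξ hμ2rξ hμ1μ2r hμ1norm hμ2rnorm hμ2ren hμ1en (t * sP) 0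
    have hcomb : ∀ l, t * sP * μ1 l + 0 * μ2r l = v l := by
      intro l
      have hv0 : v l = t * p l := by have h := hcase l; rw [hv'l l] at h; linarith
      rw [hμ1l, zero_mul, add_zero, hv0]
      field_simp
    calc ∑ l, (v l : ℂ) * F l ξ
        = ∑ l, ((t * sP * μ1 l + 0 * μ2r l : ℝ) : ℂ) * F l ξ :=
          (Finset.sum_congr rfl (fun l _ => by rw [hcomb l])).symm
      _ = 0 := happ
  · push_neg at hcase
    obtain ⟨l₀, hl₀⟩ := hcase
    set S : ℝ := ∑ l, v' l ^ 2 with hSdef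
    have hS0 : 0 < S := by
      have h1 : v' l₀ ^ 2 ≤ S :=
        Finset.single_le_sum (f := fun l => v' l ^ 2) (fun i _ => sq_nonneg _) (mem_univ l₀)
      have h2 : 0 < v' l₀ ^ 2 := lt_of_le_of_ne (sq_nonneg _) (Ne.symm (pow_ne_zero 2 hl₀))
      linarith
    set sS : ℝ := Real.sqrt S with hsSdef
    have hsS0 : 0 < sS := Real.sqrt_pos.mpr hS0
    set μ2 : EuclideanSpace ℝ (Fin n) := sS⁻¹ • v' with hμ2def
    have hμ2l : ∀ l, μ2 l = sS⁻¹ * v' l := fun l => rfl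
    have hμ2norm : ‖μ2‖ = 1 := aux_norm_scaled n v' S hS0 hSdef.symm
    have hμ2ξ : ∑ l, ξ l * μ2 l = 0 := by
      have h : ∀ l, ξ l * μ2 l = sS⁻¹ * (v' l * ξ l) := by intro l; rw [hμ2l]; ring
      rw [Finset.sum_congr rfl (fun l _ => h l), ← Finset.mul_sum, hv'ξ, mul_zero]
    have hμ1μ2 : ∑ l, μ1 l * μ2 l = 0 := by
      have h : ∀ l, μ1 l * μ2 l = (sP⁻¹ * sS⁻¹) * (v' l * p l) := by
        intro l; rw [hμ1l, hμ2l]; ring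
      rw [Finset.sum_congr rfl (fun l _ => h l), ← Finset.mul_sum, hv'p, mul_zero]
    have hμ2en : μ2 en = 0 := by rw [hμ2l, hv'en, mul_zero]
    have happ := horth' ξ μ1 μ2 hμ1ξ hμ2ξ hμ1μ2 hμ1norm hμ2norm hμ2en hμ1en (t * sP) sS
    have hcomb : ∀ l, t * sP * μ1 l + sS * μ2 l = v l := by
      intro l
      rw [hμ1l, hμ2l, hv'l]
      field_simp
      ring
    calc ∑ l, (v l : ℂ) * F l ξ
        = ∑ l, ((t * sP * μ1 l + sS * μ2 l : ℝ) : ℂ) * F l ξ :=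
          (Finset.sum_congr rfl (fun l _ => by rw [hcomb l])).symm
      _ = 0 := happ

lemma aux_curl_gen (n : ℕ) (hn : 3 ≤ n) (en : Fin n)
    (F : Fin n → EuclideanSpace ℝ (Fin n) → ℂ)
    (horth' : ∀ ξ μ1 μ2 : EuclideanSpace ℝ (Fin n),
      (∑ j, ξ j * μ1 j) = 0 → (∑ j, ξ j * μ2 j) = 0 → (∑ j, μ1 j * μ2 j) = 0 →
      ‖μ1‖ = 1 → ‖μ2‖ = 1 → μ2 en = 0 → μ1 en ≠ 0 →
      ∀ a b : ℝ, ∑ j, ((a * μ1 j + b * μ2 j : ℝ) : ℂ) * F j ξ = 0)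
    (ξ : EuclideanSpace ℝ (Fin n)) (i₁ : Fin n) (hi₁ : i₁ ≠ en) (hξ : ξ i₁ ≠ 0)
    (j k : Fin n) :
    (ξ j : ℂ) * F k ξ = (ξ k : ℂ) * F j ξ := by
  classical
  set v : EuclideanSpace ℝ (Fin n) :=
    WithLp.toLp 2 (fun l => (if l = j then ξ k else 0) - (if l = k then ξ j else 0)) with hvdef
  have hvl : ∀ l, v l = (if l = j then ξ k else 0) - (if l = k then ξ j else 0) := fun l => rfl
  have hv : ∑ l, v l * ξ l = 0 := by
    have h : ∀ l, v l * ξ l = (if l = j then ξ k * ξ l else 0) - (if l = k then ξ j * ξ l else 0) := by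
      intro l; rw [hvl l]; split_ifs <;> ring
    rw [Finset.sum_congr rfl (fun l _ => h l), Finset.sum_sub_distrib,
      Finset.sum_ite_eq' univ j (fun l => ξ k * ξ l),
      Finset.sum_ite_eq' univ k (fun l => ξ j * ξ l)]
    simp; ring
  have hkey := aux_key n hn en F horth' ξ i₁ hi₁ hξ v hv
  have h : ∀ l, (v l : ℂ) * F l ξ =
      (if l = j then (ξ k : ℂ) * F l ξ else 0) - (if l = k then (ξ j : ℂ) * F l ξ else 0) := by
    intro l; rw [hvl l]; split_ifs <;> push_cast <;> ring
  rw [Finset.sum_congr rfl (fun l _ => h l), Finset.sum_sub_distrib,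
    Finset.sum_ite_eq' univ j (fun l => (ξ k : ℂ) * F l ξ),
    Finset.sum_ite_eq' univ k (fun l => (ξ j : ℂ) * F l ξ)] at hkey
  simp only [mem_univ, if_true] at hkey
  linear_combination -hkey

lemma aux_cont (n : ℕ) (w : EuclideanSpace ℝ (Fin n) → Fin n → ℂ)
    (hint : ∀ j : Fin n, Integrable (fun x => w x j)) (j : Fin n) :
    Continuous (fun ξ : EuclideanSpace ℝ (Fin n) =>
      ∫ x, w x j * Complex.exp (Complex.I * ∑ k, (x k : ℂ) * (ξ k : ℂ))) := by
  have hcoord : ∀ l : Fin n, Continuous (fun ξ : EuclideanSpace ℝ (Fin n) => ξ l) := by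
    intro l
    exact (EuclideanSpace.proj l).continuous
  have hexp : ∀ x : EuclideanSpace ℝ (Fin n), Continuous (fun ξ : EuclideanSpace ℝ (Fin n) =>
      Complex.exp (Complex.I * ∑ k, (x k : ℂ) * (ξ k : ℂ))) := by
    intro x
    apply Complex.continuous_exp.comp
    apply Continuous.mul continuous_const
    apply continuous_finset_sum
    intro l _
    exact continuous_const.mul (Complex.continuous_ofReal.comp (hcoord l))
  have hexp' : ∀ ξ : EuclideanSpace ℝ (Fin n), Continuous (fun x : EuclideanSpace ℝ (Fin n) =>
      Complex.exp (Complex.I * ∑ k, (x k : ℂ) * (ξ k : ℂ))) := by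
    intro ξ
    apply Complex.continuous_exp.comp
    apply Continuous.mul continuous_const
    apply continuous_finset_sum
    intro l _
    exact (Complex.continuous_ofReal.comp ((EuclideanSpace.proj l).continuous)).mul continuous_const
  have hnorm1 : ∀ (x ξ : EuclideanSpace ℝ (Fin n)),
      ‖Complex.exp (Complex.I * ∑ k, (x k : ℂ) * (ξ k : ℂ))‖ = 1 := by
    intro x ξ
    have hcast : (∑ k, (x k : ℂ) * (ξ k : ℂ)) = ((∑ k, x k * ξ k : ℝ) : ℂ) := by push_cast; ring
    rw [hcast, Complex.norm_exp]
    simp [Complex.mul_re]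
  apply MeasureTheory.continuous_of_dominated
    (bound := fun x => ‖w x j‖)
  · intro ξ
    exact (hint j).aestronglyMeasurable.mul (hexp' ξ).aestronglyMeasurable
  · intro ξ
    filter_upwards with x
    rw [norm_mul, hnorm1 x ξ, mul_one]
  · exact (hint j).norm
  · filter_upwards with x
    exact continuous_const.mul (hexp x)

lemma aux_exists_ne (n : ℕ) (hn : 3 ≤ n) (a b : Fin n) : ∃ i : Fin n, i ≠ a ∧ i ≠ b := by
  by_contra hcon
  push_neg at hcon
  have hsub : (Finset.univ : Finset (Fin n)) ⊆ {a, b} := by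
    intro i _
    simp only [Finset.mem_insert, Finset.mem_singleton]
    rcases eq_or_ne i a with h' | h'
    · exact Or.inl h'
    · exact Or.inr (hcon i h')
  have h1 := Finset.card_le_card hsub
  have h2 : ({a, b} : Finset (Fin n)).card ≤ 2 := (Finset.card_insert_le _ _).trans (by simp)
  rw [Finset.card_univ, Fintype.card_fin] at h1
  omega


/-- Proposition 4.1: if a compactly supported integrable vector field
`w : ℝⁿ → ℂⁿ` satisfies `∑ⱼ (a μ¹ⱼ + b μ²ⱼ) ∫ wⱼ(x) e^{i x⋅ξ} dx = 0` for all
real `a, b` and all orthonormal `μ¹, μ²` orthogonal to `ξ` with `μ²ₙ = 0` and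
`μ¹ₙ ≠ 0`, then `ξⱼ ∫ w_k e^{i x⋅ξ} dx = ξ_k ∫ wⱼ e^{i x⋅ξ} dx` for all
`ξ, j, k`; equivalently, the distributional curl of `w` vanishes. -/
theorem curl_eq_zero_of_orthogonality_same_hyperplane
    (n : ℕ) (hn : 3 ≤ n)
    (en : Fin n) (hen : (en : ℕ) = n - 1)
    (w : EuclideanSpace ℝ (Fin n) → Fin n → ℂ)
    (hint : ∀ j : Fin n, Integrable (fun x => w x j))
    (hsupp : HasCompactSupport w)
    (horth : ∀ ξ μ1 μ2 : EuclideanSpace ℝ (Fin n),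
      (∑ j, ξ j * μ1 j) = 0 → (∑ j, ξ j * μ2 j) = 0 → (∑ j, μ1 j * μ2 j) = 0 →
      ‖μ1‖ = 1 → ‖μ2‖ = 1 → μ2 en = 0 → μ1 en ≠ 0 →
      ∀ a b : ℝ,
      ∑ j, ((a * μ1 j + b * μ2 j : ℝ) : ℂ) *
        ∫ x, w x j * Complex.exp (Complex.I * ∑ k, (x k : ℂ) * (ξ k : ℂ)) = 0) :
    ∀ ξ : EuclideanSpace ℝ (Fin n), ∀ j k : Fin n,
      (ξ j : ℂ) * ∫ x, w x k * Complex.exp (Complex.I * ∑ l, (x l : ℂ) * (ξ l : ℂ))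
      = (ξ k : ℂ) * ∫ x, w x j * Complex.exp (Complex.I * ∑ l, (x l : ℂ) * (ξ l : ℂ)) := by
  classical
  set F : Fin n → EuclideanSpace ℝ (Fin n) → ℂ :=
    fun j ξ => ∫ x, w x j * Complex.exp (Complex.I * ∑ l, (x l : ℂ) * (ξ l : ℂ)) with hFdef
  have horth' : ∀ ξ μ1 μ2 : EuclideanSpace ℝ (Fin n),
      (∑ j, ξ j * μ1 j) = 0 → (∑ j, ξ j * μ2 j) = 0 → (∑ j, μ1 j * μ2 j) = 0 →
      ‖μ1‖ = 1 → ‖μ2‖ = 1 → μ2 en = 0 → μ1 en ≠ 0 →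
      ∀ a b : ℝ, ∑ j, ((a * μ1 j + b * μ2 j : ℝ) : ℂ) * F j ξ = 0 := horth
  intro ξ j k
  show (ξ j : ℂ) * F k ξ = (ξ k : ℂ) * F j ξ
  by_cases hgen : ∃ i, i ≠ en ∧ ξ i ≠ 0
  · obtain ⟨i₁, hi₁, hξi⟩ := hgen
    exact aux_curl_gen n hn en F horth' ξ i₁ hi₁ hξi j k
  · push_neg at hgen
    by_cases hen0 : ξ en = 0
    · have hz : ∀ l, ξ l = 0 := by
        intro l
        by_cases hl : l = en
        · rw [hl]; exact hen0
        · exact hgen l hl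
      rw [hz j, hz k]
      norm_num
    · have hvan : ∀ k' : Fin n, k' ≠ en → F k' ξ = 0 := by
        intro k' hk'
        obtain ⟨i₀, hi₀en, hi₀k'⟩ := aux_exists_ne n hn en k'
        set g : ℝ → EuclideanSpace ℝ (Fin n) :=
          fun ε => ξ + ε • EuclideanSpace.single i₀ (1:ℝ) with hgdef
        have hgl : ∀ (ε : ℝ) (l : Fin n), g ε l = ξ l + ε * (if l = i₀ then 1 else 0) := by
          intro ε l
          simp [hgdef, EuclideanSpace.single_apply]
        have hgcont : Continuous g := by
          apply continuous_const.add
          exact (continuous_id.smul continuous_const)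
        have hzero : ∀ ε : ℝ, ε ≠ 0 → F k' (g ε) = 0 := by
          intro ε hε
          have hgi₀ : g ε i₀ ≠ 0 := by
            rw [hgl ε i₀, if_pos rfl, hgen i₀ hi₀en, mul_one, zero_add]
            exact hε
          have hrel := aux_curl_gen n hn en F horth' (g ε) i₀ hi₀en hgi₀ en k'
          have h1 : g ε en = ξ en := by
            rw [hgl ε en, if_neg (fun h => hi₀en h.symm), mul_zero, add_zero]
          have h2 : g ε k' = 0 := by
            rw [hgl ε k', if_neg (fun h => hi₀k' h.symm), mul_zero, add_zero]
            exact hgen k' hk'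
          rw [h1, h2] at hrel
          norm_num at hrel
          rcases hrel with hrel | hrel
          · exact absurd hrel hen0
          · exact hrel
        have hg0 : g 0 = ξ := by
          rw [hgdef]; simp
        have hcont : Continuous (F k') := aux_cont n w hint k'
        have htend : Filter.Tendsto (fun ε => F k' (g ε)) (nhdsWithin 0 {(0:ℝ)}ᶜ)
            (nhds (F k' ξ)) := by
          have h : Filter.Tendsto (F k' ∘ g) (nhdsWithin 0 {(0:ℝ)}ᶜ) (nhds ((F k' ∘ g) 0)) :=
            ((hcont.comp hgcont).tendsto 0).mono_left nhdsWithin_le_nhds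
          simp only [Function.comp_def, hg0] at h
          exact h
        have htend0 : Filter.Tendsto (fun ε => F k' (g ε)) (nhdsWithin 0 {(0:ℝ)}ᶜ)
            (nhds 0) := by
          apply Filter.Tendsto.congr' _ tendsto_const_nhds
          filter_upwards [self_mem_nhdsWithin] with ε hε
          exact (hzero ε hε).symm
        exact tendsto_nhds_unique htend htend0
      by_cases hj : j = en <;> by_cases hk : k = en
      · rw [hj, hk]
      · rw [hvan k hk, hgen k hk]
        norm_num
      · rw [hvan j hj, hgen j hj]
        norm_num
      · rw [hgen j hj, hgen k hk]
        norm_num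
end
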